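/- If V is a multiplicative partial isometry, then V₁₂V₁₃V₁₃* = V₂₃V₂₃*V₁₂. -/
import Mathlib


open Matrix

namespace MPIpaper

variable {n : Type*} [Fintype n] [DecidableEq n]

noncomputable section

/-- `W₁₂ = W ⊗ 1` on `H ⊗ H ⊗ H`. -/
def leg12 (V : Matrix (n × n) (n × n) ℂ) : Matrix (n × n × n) (n × n × n) ℂ :=
  Matrix.of fun p q => V (p.1, p.2.1) (q.1, q.2.1) * (if p.2.2 = q.2.2 then (1 : ℂ) else 0)

/-- `W₂₃ = 1 ⊗ W` on `H ⊗ H ⊗ H`. -/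
def leg23 (V : Matrix (n × n) (n × n) ℂ) : Matrix (n × n × n) (n × n × n) ℂ :=
  Matrix.of fun p q => (if p.1 = q.1 then (1 : ℂ) else 0) * V p.2 q.2

/-- `W₁₃ = (1⊗Σ)(W⊗1)(1⊗Σ)` on `H ⊗ H ⊗ H`. -/
def leg13 (V : Matrix (n × n) (n × n) ℂ) : Matrix (n × n × n) (n × n × n) ℂ :=
  Matrix.of fun p q => V (p.1, p.2.2) (q.1, q.2.2) * (if p.2.1 = q.2.1 then (1 : ℂ) else 0)

/-- A multiplicative partial isometry: `VV*V = V`, the pentagon equation, and the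
three auxiliary (hexagon-type) equations. -/
def IsMPI (V : Matrix (n × n) (n × n) ℂ) : Prop :=
  V * Vᴴ * V = V ∧
  leg23 V * leg12 V = leg12 V * leg13 V * leg23 V ∧
  leg13 V * leg23 V * (leg23 V)ᴴ = (leg12 V)ᴴ * leg12 V * leg13 V ∧
  leg12 V * (leg12 V)ᴴ * leg23 V = leg23 V * leg12 V * (leg12 V)ᴴ ∧
  leg12 V * (leg23 V)ᴴ * leg23 V = (leg23 V)ᴴ * leg23 V * leg12 V

/-- `λ(ω) = (ω ⊗ id)(V)`. -/
def lam (ω : Matrix n n ℂ →ₗ[ℂ] ℂ) (V : Matrix (n × n) (n × n) ℂ) : Matrix n n ℂ :=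
  Matrix.of fun i j => ω (Matrix.of fun a b => V (a, i) (b, j))

/-- `ρ(ω) = (id ⊗ ω)(V)`. -/
def rho (ω : Matrix n n ℂ →ₗ[ℂ] ℂ) (V : Matrix (n × n) (n × n) ℂ) : Matrix n n ℂ :=
  Matrix.of fun i j => ω (Matrix.of fun a b => V (i, a) (j, b))

/-- `1 ⊗ X` on `H ⊗ H`. -/
def oneTensor (X : Matrix n n ℂ) : Matrix (n × n) (n × n) ℂ :=
  Matrix.of fun p q => (if p.1 = q.1 then (1 : ℂ) else 0) * X p.2 q.2

/-- `X ⊗ 1` on `H ⊗ H`. -/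
def tensorOne (X : Matrix n n ℂ) : Matrix (n × n) (n × n) ℂ :=
  Matrix.of fun p q => X p.1 q.1 * (if p.2 = q.2 then (1 : ℂ) else 0)

/-- `Δ(X) = V (X ⊗ 1) V*`. -/
def Delta (V : Matrix (n × n) (n × n) ℂ) (X : Matrix n n ℂ) : Matrix (n × n) (n × n) ℂ :=
  V * tensorOne X * Vᴴ

/-- `Δ̂(X) = V* (1 ⊗ X) V`. -/
def hatDelta (V : Matrix (n × n) (n × n) ℂ) (X : Matrix n n ℂ) : Matrix (n × n) (n × n) ℂ :=
  Vᴴ * oneTensor X * V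

/-- `(ω ⊗ ω')(W)` for an operator `W` on `H ⊗ H`. -/
def applyBoth (ω ω' : Matrix n n ℂ →ₗ[ℂ] ℂ) (W : Matrix (n × n) (n × n) ℂ) : ℂ :=
  ω (Matrix.of fun i j => ω' (Matrix.of fun k l => W (i, k) (j, l)))

end

section Aux

lemma leg12_mul (A B : Matrix (n × n) (n × n) ℂ) : leg12 (A * B) = leg12 A * leg12 B := by
  ext ⟨i,j,k⟩ ⟨i',j',k'⟩
  simp [leg12, Matrix.mul_apply, Fintype.sum_prod_type, mul_ite, ite_mul,
    Finset.sum_ite_eq', Finset.mul_sum, Finset.sum_mul, mul_comm, mul_left_comm]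

lemma leg12_conj (A : Matrix (n × n) (n × n) ℂ) : (leg12 A)ᴴ = leg12 Aᴴ := by
  ext ⟨i,j,k⟩ ⟨i',j',k'⟩
  simp [leg12, Matrix.conjTranspose_apply, apply_ite, eq_comm]; split_ifs <;> simp_all

lemma leg23_mul (A B : Matrix (n × n) (n × n) ℂ) : leg23 (A * B) = leg23 A * leg23 B := by
  ext ⟨i,j,k⟩ ⟨i',j',k'⟩
  simp [leg23, Matrix.mul_apply, Fintype.sum_prod_type, mul_ite, ite_mul,
    Finset.sum_ite_eq', Finset.mul_sum, Finset.sum_mul, mul_comm, mul_left_comm]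

lemma leg23_conj (A : Matrix (n × n) (n × n) ℂ) : (leg23 A)ᴴ = leg23 Aᴴ := by
  ext ⟨i,j,k⟩ ⟨i',j',k'⟩
  simp [leg23, Matrix.conjTranspose_apply, apply_ite, eq_comm]; split_ifs <;> simp_all

lemma key {R : Type*} [Monoid R] [StarMul R] (a b c : R)
    (ha : a * star a * a = a) (hc : c * star c * c = c)
    (hp : c * a = a * b * c) (h1 : b * c * star c = star a * a * b)
    (h2 : a * star a * c = c * a * star a) :
    a * b * star b = c * star c * a := by
  have step1 : star a * c * a = b * c := by
    calc star a * c * a = star a * (c * a) := by rw [mul_assoc]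
    _ = star a * (a * b * c) := by rw [hp]
    _ = star a * a * b * c := by simp only [mul_assoc]
    _ = b * c * star c * c := by rw [← h1]
    _ = b * (c * star c * c) := by simp only [mul_assoc]
    _ = b * c := by rw [hc]
  have h2' : a * star a * star c = star c * (a * star a) := by
    have h := congrArg star h2
    simpa [StarMul.star_mul, mul_assoc] using h.symm
  calc a * b * star b
      = a * star a * a * b * star b := by rw [ha]
    _ = a * (star a * a * b) * star b := by simp only [mul_assoc]
    _ = a * (b * c * star c) * star b := by rw [h1]
    _ = a * b * c * (star c * star b) := by simp only [mul_assoc]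
    _ = c * a * (star c * star b) := by rw [← hp]
    _ = c * a * star (b * c) := by rw [StarMul.star_mul]
    _ = c * a * star (star a * c * a) := by rw [step1]
    _ = c * (a * star a) * star c * a := by
          simp only [StarMul.star_mul, star_star, mul_assoc]
    _ = c * ((a * star a) * star c) * a := by simp only [mul_assoc]
    _ = c * (star c * (a * star a)) * a := by rw [h2']
    _ = c * star c * (a * star a * a) := by simp only [mul_assoc]
    _ = c * star c * a := by rw [ha]

end Aux

theorem statement4 (V : Matrix (n × n) (n × n) ℂ) (hV : IsMPI V) :
    leg12 V * leg13 V * (leg13 V)ᴴ = leg23 V * (leg23 V)ᴴ * leg12 V := by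
  obtain ⟨h0, hp, h1, h2, -⟩ := hV
  have ha : leg12 V * (leg12 V)ᴴ * leg12 V = leg12 V := by
    rw [leg12_conj, ← leg12_mul, ← leg12_mul, h0]
  have hc : leg23 V * (leg23 V)ᴴ * leg23 V = leg23 V := by
    rw [leg23_conj, ← leg23_mul, ← leg23_mul, h0]
  have h := key (leg12 V) (leg13 V) (leg23 V)
    (by simpa [Matrix.star_eq_conjTranspose] using ha)
    (by simpa [Matrix.star_eq_conjTranspose] using hc)
    (by simpa [Matrix.star_eq_conjTranspose] using hp)
    (by simpa [Matrix.star_eq_conjTranspose] using h1)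
    (by simpa [Matrix.star_eq_conjTranspose] using h2)
  simpa [Matrix.star_eq_conjTranspose] using h

end MPIpaper
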